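/- Let X be an A–B imprimitivity bimodule and let π : B → B(H) be a representation of B on a Hilbert space H. Then for each x ∈ X, tr(π(⟨x,x⟩_B)) = tr((X-Ind π)(⟨x,x⟩_A)) as elements of [0,∞]. -/

import Mathlib

noncomputable section

open scoped ComplexInnerProductSpace ENNReal

/-- A bundled complex Hilbert space. -/
structure HilbertBundle : Type 1 where
  carrier : Type
  [nacg : NormedAddCommGroup carrier]
  [ips : InnerProductSpace ℂ carrier]
  [cs : CompleteSpace carrier]

attribute [instance] HilbertBundle.nacg HilbertBundle.ips HilbertBundle.cs

/-- A representation of a (possibly non-unital) C⋆-algebra on a Hilbert space, i.e. a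
⋆-homomorphism into the bounded operators. -/
structure CStarRep (B : Type) [NonUnitalCStarAlgebra B] : Type 1 where
  space : HilbertBundle
  π : B →⋆ₙₐ[ℂ] (space.carrier →L[ℂ] space.carrier)

/-- An `A`–`B` imprimitivity bimodule: a complex vector space `X` which is a full left Hilbert
`A`-module and a full right Hilbert `B`-module, with commuting actions, satisfying
`⟨x,y⟩_A ⬝ z = x ⬝ ⟨y,z⟩_B`.  The `A`-valued inner product is linear in the first variable and
the `B`-valued one in the second.  `X` is complete for the norm `‖x‖ = ‖⟨x,x⟩_B‖^{1/2}`
(which coincides with `‖⟨x,x⟩_A‖^{1/2}`). -/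
structure ImprimitivityBimodule (A B : Type) [NonUnitalCStarAlgebra A]
    [NonUnitalCStarAlgebra B] : Type 1 where
  X : Type
  [nacg : NormedAddCommGroup X]
  [nsp : NormedSpace ℂ X]
  [cs : CompleteSpace X]
  smulA : A → X → X
  smulB : X → B → X
  innA : X → X → A
  innB : X → X → B
  -- `X` is a left `A`-module
  smulA_add : ∀ a x y, smulA a (x + y) = smulA a x + smulA a y
  add_smulA : ∀ a a' x, smulA (a + a') x = smulA a x + smulA a' x
  mul_smulA : ∀ a a' x, smulA (a * a') x = smulA a (smulA a' x)
  smulA_smul : ∀ (c : ℂ) a x, smulA (c • a) x = c • smulA a x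
  smulA_smul' : ∀ (c : ℂ) a x, smulA a (c • x) = c • smulA a x
  -- `X` is a right `B`-module
  smulB_add : ∀ x y b, smulB (x + y) b = smulB x b + smulB y b
  smulB_add' : ∀ x b b', smulB x (b + b') = smulB x b + smulB x b'
  smulB_mul : ∀ x b b', smulB x (b * b') = smulB (smulB x b) b'
  smulB_smul : ∀ (c : ℂ) x b, smulB x (c • b) = c • smulB x b
  smulB_smul' : ∀ (c : ℂ) x b, smulB (c • x) b = c • smulB x b
  -- the two actions commute
  smul_commutes : ∀ a x b, smulB (smulA a x) b = smulA a (smulB x b)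
  -- the `A`-valued inner product (linear in the first variable)
  innA_add : ∀ x y z, innA (x + y) z = innA x z + innA y z
  innA_add' : ∀ x y z, innA x (y + z) = innA x y + innA x z
  innA_smul : ∀ (c : ℂ) x y, innA (c • x) y = c • innA x y
  innA_star : ∀ x y, star (innA x y) = innA y x
  innA_smulA : ∀ a x y, innA (smulA a x) y = a * innA x y
  innA_pos : ∀ x, ∃ a, innA x x = star a * a
  innA_definite : ∀ x, innA x x = 0 → x = 0
  -- the `B`-valued inner product (linear in the second variable)
  innB_add : ∀ x y z, innB (x + y) z = innB x z + innB y z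
  innB_add' : ∀ x y z, innB x (y + z) = innB x y + innB x z
  innB_smul : ∀ (c : ℂ) x y, innB x (c • y) = c • innB x y
  innB_star : ∀ x y, star (innB x y) = innB y x
  innB_smulB : ∀ x y b, innB x (smulB y b) = innB x y * b
  innB_pos : ∀ x, ∃ b, innB x x = star b * b
  innB_definite : ∀ x, innB x x = 0 → x = 0
  -- the norm on `X` is the Hilbert-module norm for both inner products
  norm_innA : ∀ x, ‖x‖ ^ 2 = ‖innA x x‖
  norm_innB : ∀ x, ‖x‖ ^ 2 = ‖innB x x‖
  -- fullness of both inner products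
  full_innA : closure (Submodule.span ℂ {a : A | ∃ x y, a = innA x y} : Set A) = Set.univ
  full_innB : closure (Submodule.span ℂ {b : B | ∃ x y, b = innB x y} : Set B) = Set.univ
  -- the imprimitivity condition `⟨x,y⟩_A ⬝ z = x ⬝ ⟨y,z⟩_B`
  imprimitivity : ∀ x y z, smulA (innA x y) z = smulB x (innB y z)

attribute [instance] ImprimitivityBimodule.nacg ImprimitivityBimodule.nsp
  ImprimitivityBimodule.cs
/-- A realization of the induced representation `X-Ind π` of `A` on `X ⊗_B H`, given an
`A`–`B` imprimitivity bimodule `X` and a representation `π` of `B` on `H`.  The map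
`t x h = x ⊗ h` is bilinear, `B`-balanced, has dense range span, satisfies the pre-inner
product identity `(x ⊗ h | y ⊗ k) = (π(⟨y,x⟩_B) h | k)` (written below in Mathlib's
convention, where the inner product is conjugate-linear in the first variable), and
intertwines the `A`-actions: `(X-Ind π)(a)(x ⊗ h) = (a⬝x) ⊗ h`. -/
structure InducedRepWitness {A B : Type} [NonUnitalCStarAlgebra A] [NonUnitalCStarAlgebra B]
    (E : ImprimitivityBimodule A B) (ρ : CStarRep B) (ρ' : CStarRep A) : Type 1 where
  t : E.X → ρ.space.carrier → ρ'.space.carrier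
  t_add_left : ∀ x y h, t (x + y) h = t x h + t y h
  t_add_right : ∀ x h k, t x (h + k) = t x h + t x k
  t_smul_left : ∀ (c : ℂ) x h, t (c • x) h = c • t x h
  t_smul_right : ∀ (c : ℂ) x h, t x (c • h) = c • t x h
  t_balanced : ∀ x b h, t (E.smulB x b) h = t x (ρ.π b h)
  t_inner : ∀ x y h k, ⟪t y k, t x h⟫ = ⟪k, ρ.π (E.innB y x) h⟫
  t_dense : closure (Submodule.span ℂ {v : ρ'.space.carrier | ∃ x h, v = t x h} :
      Set ρ'.space.carrier) = Set.univ
  t_intertwine : ∀ a x h, ρ'.π a (t x h) = t (E.smulA a x) h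

/-! The map `T : h ↦ x ⊗ h` from `H` to `X ⊗_B H` is bounded, with `T† (y ⊗ k) = π(⟨x,y⟩_B) k`.
Hence `T† T = π(⟨x,x⟩_B)` and, by the imprimitivity condition `x ⬝ ⟨x,y⟩_B = ⟨x,x⟩_A ⬝ y`,
`T T† = (X-Ind π)(⟨x,x⟩_A)`. Both traces are therefore the Hilbert–Schmidt norm `∑ ‖T eᵢ‖²`,
which by Parseval and Tonelli equals that of `T†`. -/

open scoped InnerProductSpace InnerProduct

section HilbertSchmidt

variable {𝕜 E F ι κ : Type*} [RCLike 𝕜]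
  [NormedAddCommGroup E] [InnerProductSpace 𝕜 E] [NormedAddCommGroup F] [InnerProductSpace 𝕜 F]

theorem HilbertBasis.hasSum_norm_inner_sq (b : HilbertBasis ι 𝕜 E) (v : E) :
    HasSum (fun i => ‖⟪b i, v⟫_𝕜‖ ^ 2) (‖v‖ ^ 2) := by
  simpa [b.repr_apply_apply] using lp.hasSum_norm (p := 2) (by norm_num) (b.repr v)

theorem HilbertBasis.tsum_ofReal_norm_inner_sq (b : HilbertBasis ι 𝕜 E) (v : E) :
    ∑' i, ENNReal.ofReal (‖⟪b i, v⟫_𝕜‖ ^ 2) = ENNReal.ofReal (‖v‖ ^ 2) := by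
  rw [← ENNReal.ofReal_tsum_of_nonneg (fun _ => by positivity)
    (b.hasSum_norm_inner_sq v).summable, (b.hasSum_norm_inner_sq v).tsum_eq]

namespace ContinuousLinearMap

variable [CompleteSpace E] [CompleteSpace F]

theorem tsum_ofReal_norm_apply_sq_eq_adjoint (T : E →L[𝕜] F) (b : HilbertBasis ι 𝕜 E)
    (c : HilbertBasis κ 𝕜 F) :
    ∑' i, ENNReal.ofReal (‖T (b i)‖ ^ 2) = ∑' j, ENNReal.ofReal (‖(T†) (c j)‖ ^ 2) := by
  calc ∑' i, ENNReal.ofReal (‖T (b i)‖ ^ 2)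
      = ∑' i, ∑' j, ENNReal.ofReal (‖⟪c j, T (b i)⟫_𝕜‖ ^ 2) := by
        simp only [c.tsum_ofReal_norm_inner_sq]
    _ = ∑' j, ∑' i, ENNReal.ofReal (‖⟪b i, (T†) (c j)⟫_𝕜‖ ^ 2) := by
        rw [ENNReal.tsum_comm]
        simp only [adjoint_inner_right, norm_inner_symm (c _)]
    _ = ∑' j, ENNReal.ofReal (‖(T†) (c j)‖ ^ 2) := by
        simp only [b.tsum_ofReal_norm_inner_sq]

theorem tsum_ofReal_re_inner_adjoint_comp_self (T : E →L[𝕜] F) (b : HilbertBasis ι 𝕜 E)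
    (c : HilbertBasis κ 𝕜 F) :
    ∑' i, ENNReal.ofReal (RCLike.re ⟪b i, (T† ∘L T) (b i)⟫_𝕜) =
      ∑' j, ENNReal.ofReal (RCLike.re ⟪c j, (T ∘L T†) (c j)⟫_𝕜) := by
  simpa only [apply_norm_sq_eq_inner_adjoint_right, adjoint_adjoint] using
    T.tsum_ofReal_norm_apply_sq_eq_adjoint b c

end ContinuousLinearMap

end HilbertSchmidt

namespace InducedRepWitness

variable {A B : Type} [NonUnitalCStarAlgebra A] [NonUnitalCStarAlgebra B]
  {E : ImprimitivityBimodule A B} {ρ : CStarRep B} {ρ' : CStarRep A} (W : InducedRepWitness E ρ ρ')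

theorem norm_t_sq (x : E.X) (h : ρ.space.carrier) :
    ‖W.t x h‖ ^ 2 = RCLike.re ⟪h, ρ.π (E.innB x x) h⟫ := by
  rw [← W.t_inner, inner_self_eq_norm_sq]

theorem norm_t_le (x : E.X) (h : ρ.space.carrier) :
    ‖W.t x h‖ ≤ √‖ρ.π (E.innB x x)‖ * ‖h‖ := by
  rw [← Real.sqrt_sq (norm_nonneg h), ← Real.sqrt_mul (norm_nonneg _)]
  refine Real.le_sqrt_of_sq_le ?_
  calc ‖W.t x h‖ ^ 2 = RCLike.re ⟪h, ρ.π (E.innB x x) h⟫ := W.norm_t_sq x h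
    _ ≤ ‖h‖ * ‖ρ.π (E.innB x x) h‖ := re_inner_le_norm _ _
    _ ≤ ‖h‖ * (‖ρ.π (E.innB x x)‖ * ‖h‖) := by gcongr; exact ContinuousLinearMap.le_opNorm _ _
    _ = ‖ρ.π (E.innB x x)‖ * ‖h‖ ^ 2 := by ring

def tmulLeft (x : E.X) : ρ.space.carrier →L[ℂ] ρ'.space.carrier :=
  LinearMap.mkContinuous
    { toFun := W.t x
      map_add' := W.t_add_right x
      map_smul' := fun c h => W.t_smul_right c x h }
    _ (W.norm_t_le x)

@[simp]
theorem tmulLeft_apply (x : E.X) (h : ρ.space.carrier) : W.tmulLeft x h = W.t x h := rfl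

theorem adjoint_tmulLeft_apply (x y : E.X) (k : ρ.space.carrier) :
    ((W.tmulLeft x)†) (W.t y k) = ρ.π (E.innB x y) k :=
  ext_inner_left ℂ fun h => by
    rw [ContinuousLinearMap.adjoint_inner_right, tmulLeft_apply, W.t_inner]

theorem adjoint_tmulLeft_comp_tmulLeft (x : E.X) :
    (W.tmulLeft x)† ∘L W.tmulLeft x = ρ.π (E.innB x x) := by
  ext h
  exact W.adjoint_tmulLeft_apply x x h

theorem ext_t {F : Type*} [TopologicalSpace F] [AddCommMonoid F] [Module ℂ F] [T2Space F]
    {f g : ρ'.space.carrier →L[ℂ] F} (hfg : ∀ y k, f (W.t y k) = g (W.t y k)) : f = g :=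
  ContinuousLinearMap.ext_on (dense_iff_closure_eq.2 W.t_dense) <| by
    rintro _ ⟨y, k, rfl⟩
    exact hfg y k

theorem tmulLeft_comp_adjoint (x : E.X) :
    W.tmulLeft x ∘L (W.tmulLeft x)† = ρ'.π (E.innA x x) :=
  W.ext_t fun y k => by
    rw [ContinuousLinearMap.comp_apply, adjoint_tmulLeft_apply, tmulLeft_apply, ← W.t_balanced,
      ← E.imprimitivity, W.t_intertwine]

end InducedRepWitness

/-- Let `X` be an `A`–`B` imprimitivity bimodule and `π : B → B(H)` a
representation of `B`.  Then for each `x ∈ X`,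
`tr(π(⟨x,x⟩_B)) = tr((X-Ind π)(⟨x,x⟩_A))` as elements of `[0,∞]`, the traces being computed
with respect to any orthonormal bases of `H` and of `X ⊗_B H`. -/
theorem trace_inducedRep_inner_eq {A B : Type}
    [NonUnitalCStarAlgebra A] [NonUnitalCStarAlgebra B]
    (E : ImprimitivityBimodule A B) (ρ : CStarRep B) (ρ' : CStarRep A)
    (W : InducedRepWitness E ρ ρ') (x : E.X)
    {ιB ιA : Type} (b : HilbertBasis ιB ℂ ρ.space.carrier)
    (b' : HilbertBasis ιA ℂ ρ'.space.carrier) :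
    ∑' i, ENNReal.ofReal (⟪b i, ρ.π (E.innB x x) (b i)⟫).re =
      ∑' j, ENNReal.ofReal (⟪b' j, ρ'.π (E.innA x x) (b' j)⟫).re := by
  have := (W.tmulLeft x).tsum_ofReal_re_inner_adjoint_comp_self b b'
  rwa [W.adjoint_tmulLeft_comp_tmulLeft, W.tmulLeft_comp_adjoint] at this
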